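/- Let T be a finite set and, for each g ∈ T, let N_g = |{h ∈ T\{g} : C(g,h)}| be the number of elements of T in conflict with g. Then for every m with 0 ≤ m ≤ |T|, the total number of problematic facts over all m-element subsets satisfies: Σ_{S ⊆ T, |S| = m} I_P(S) = Σ_{g ∈ T} Σ_{k=1}^{N_g} C(N_g, k) · C(|T|−1−N_g, m−1−k). Equivalently, the expected value of I_P over a uniformly random m-element subset of T equals the right-hand side divided by C(|T|, m). -/
import Mathlib


open scoped BigOperators Classical

variable {α : Type*} [DecidableEq α]

/-- The inconsistency measure `I_P`: the number of "problematic" facts of `E`,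
i.e., elements in conflict with some other element of `E`. -/
noncomputable def IP (C : α → α → Prop) (E : Finset α) : ℕ :=
  (E.filter fun g => ∃ h ∈ E, h ≠ g ∧ C g h).card

/-- Binomial coefficient with an integer lower argument, which is `0` for
negative lower arguments (matching the convention `C(n,k) = 0` for `k < 0`). -/
def chooseInt (n : ℕ) (k : ℤ) : ℕ :=
  if 0 ≤ k then n.choose k.toNat else 0

lemma chooseInt_coe_sub (r p k : ℕ) :
    chooseInt r ((p:ℤ) - k) = if k ≤ p then r.choose (p - k) else 0 := by
  unfold chooseInt
  rcases le_or_gt k p with h | h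
  · rw [if_pos (by omega : (0:ℤ) ≤ (p:ℤ) - k), if_pos h, Int.toNat_sub]
  · rw [if_neg (by omega : ¬ (0:ℤ) ≤ (p:ℤ) - k), if_neg (by omega)]

lemma alg_sum (n r p : ℕ) :
    ∑ k ∈ Finset.Icc 1 n, n.choose k * chooseInt r ((p:ℤ) - k)
      = (n + r).choose p - r.choose p := by
  set F : ℕ → ℕ := fun k => if k ≤ p then n.choose k * r.choose (p - k) else 0 with hF
  have hFk : ∀ k, n.choose k * chooseInt r ((p:ℤ) - k) = F k := by
    intro k
    simp only [hF, chooseInt_coe_sub]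
    rw [mul_ite, mul_zero]
  have key : ∑ k ∈ Finset.range (n+1), F k = (n + r).choose p := by
    rw [Nat.add_choose_eq, Finset.Nat.sum_antidiagonal_eq_sum_range_succ_mk]
    have e1 : ∑ k ∈ Finset.range (n+1), F k = ∑ k ∈ Finset.range (max n p + 1), F k := by
      apply Finset.sum_subset (Finset.range_subset_range.mpr (Nat.succ_le_succ (le_max_left n p)))
      intro k _ hk
      have hnk : n < k := by
        simp only [Finset.mem_range] at hk; omega
      simp [hF, Nat.choose_eq_zero_of_lt hnk]
    have e2 : ∑ k ∈ Finset.range (max n p + 1), F k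
        = ∑ k ∈ Finset.range (p+1), (n.choose k * r.choose (p - k)) := by
      have hsub : ∑ k ∈ Finset.range (p+1), F k = ∑ k ∈ Finset.range (max n p + 1), F k := by
        apply Finset.sum_subset (Finset.range_subset_range.mpr (Nat.succ_le_succ (le_max_right n p)))
        intro k _ hk
        have hpk : p < k := by simp only [Finset.mem_range] at hk; omega
        simp [hF, if_neg (by omega : ¬ k ≤ p)]
      rw [← hsub]
      refine Finset.sum_congr rfl fun k hk => ?_
      have : k ≤ p := by simp only [Finset.mem_range] at hk; omega
      simp [hF, if_pos this]
    rw [e1, e2]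
  have hsplit : F 0 + ∑ k ∈ Finset.Icc 1 n, F k = ∑ k ∈ Finset.range (n+1), F k := by
    have h0 : (Finset.range (n+1)).erase 0 = Finset.Icc 1 n := by
      ext k
      simp only [Finset.mem_erase, Finset.mem_range, Finset.mem_Icc]
      omega
    rw [← h0, Finset.add_sum_erase _ F (by simp)]
  have hF0 : F 0 = r.choose p := by simp [hF]
  calc ∑ k ∈ Finset.Icc 1 n, n.choose k * chooseInt r ((p:ℤ) - k)
      = ∑ k ∈ Finset.Icc 1 n, F k := Finset.sum_congr rfl fun k _ => hFk k
    _ = (n + r).choose p - r.choose p := by omega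

/-- The total number of problematic facts over all `m`-element subsets of `T`:
`Σ_{S ⊆ T, |S|=m} I_P(S) = Σ_{g ∈ T} Σ_{k=1}^{N_g} C(N_g,k)·C(|T|−1−N_g, m−1−k)`,
where `N_g` is the number of elements of `T` in conflict with `g`. -/
theorem sum_IP_over_subsets (C : α → α → Prop) (hsymm : Symmetric C)
    (T : Finset α) (m : ℕ) (hm : m ≤ T.card) :
    ∑ S ∈ T.powersetCard m, IP C S =
      ∑ g ∈ T,
        ∑ k ∈ Finset.Icc 1 (((T \ {g}).filter fun h => C g h).card),
          (((T \ {g}).filter fun h => C g h).card).choose k *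
            chooseInt (T.card - 1 - ((T \ {g}).filter fun h => C g h).card)
              ((m : ℤ) - 1 - (k : ℤ)) := by
  classical
  simp only [Finset.sdiff_singleton_eq_erase]
  have step1 : ∑ S ∈ T.powersetCard m, IP C S
      = ∑ g ∈ T, ((T.powersetCard m).filter
          (fun S => g ∈ S ∧ ∃ h ∈ S, h ≠ g ∧ C g h)).card := by
    have hIP : ∀ S ∈ T.powersetCard m, IP C S
        = ∑ g ∈ T, (if g ∈ S ∧ (∃ h ∈ S, h ≠ g ∧ C g h) then 1 else 0) := by
      intro S hS
      have hsub : S ⊆ T := (Finset.mem_powersetCard.mp hS).1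
      rw [IP, Finset.card_filter]
      have : ∀ g ∈ T, (if g ∈ S ∧ (∃ h ∈ S, h ≠ g ∧ C g h) then 1 else 0)
          = if g ∈ S then (if (∃ h ∈ S, h ≠ g ∧ C g h) then (1:ℕ) else 0) else 0 := by
        intro g _; rw [ite_and]
      rw [Finset.sum_congr rfl this, Finset.sum_ite_mem,
        Finset.inter_eq_right.mpr hsub]
    rw [Finset.sum_congr rfl hIP, Finset.sum_comm]
    exact Finset.sum_congr rfl fun g _ => (Finset.card_filter _ _).symm
  rw [step1]
  refine Finset.sum_congr rfl fun g hg => ?_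
  have hNR : ((T.erase g).filter fun h => C g h).card
      + ((T.erase g).filter fun h => ¬ C g h).card = T.card - 1 := by
    rw [Finset.card_filter_add_card_filter_not, Finset.card_erase_of_mem hg]
  rcases Nat.eq_zero_or_pos m with hm0 | hm1
  · subst hm0
    rw [Finset.powersetCard_zero]
    rw [Finset.filter_singleton]
    rw [if_neg (by simp)]
    rw [Finset.card_empty]
    symm
    apply Finset.sum_eq_zero
    intro k hk
    have : chooseInt (T.card - 1 - ((T.erase g).filter fun h => C g h).card)
        (((0:ℕ):ℤ) - 1 - k) = 0 := by
      unfold chooseInt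
      rw [if_neg (by push_cast; omega)]
    rw [this, mul_zero]
  · obtain ⟨p, rfl⟩ : ∃ p, m = p + 1 := ⟨m - 1, by omega⟩
    have count1 : ((T.powersetCard (p+1)).filter
          (fun S => g ∈ S ∧ ∃ h ∈ S, h ≠ g ∧ C g h)).card
        = (((T.erase g).powersetCard p).filter (fun B => ∃ h ∈ B, C g h)).card := by
      apply Finset.card_bij (fun S _ => S.erase g)
      · intro S hS
        simp only [Finset.mem_filter, Finset.mem_powersetCard] at hS ⊢
        obtain ⟨⟨hsub, hcard⟩, hgS, h, hhS, hne, hC⟩ := hS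
        refine ⟨⟨Finset.erase_subset_erase g hsub, ?_⟩, h, Finset.mem_erase.mpr ⟨hne, hhS⟩, hC⟩
        rw [Finset.card_erase_of_mem hgS, hcard]
        omega
      · intro S₁ hS₁ S₂ hS₂ h
        simp only [Finset.mem_filter] at hS₁ hS₂
        rw [← Finset.insert_erase hS₁.2.1, ← Finset.insert_erase hS₂.2.1, h]
      · intro B hB
        simp only [Finset.mem_filter, Finset.mem_powersetCard] at hB
        obtain ⟨⟨hsub, hcard⟩, h, hhB, hC⟩ := hB
        have hgB : g ∉ B := fun hg' => (Finset.mem_erase.mp (hsub hg')).1 rfl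
        refine ⟨insert g B, ?_, Finset.erase_insert hgB⟩
        simp only [Finset.mem_filter, Finset.mem_powersetCard]
        refine ⟨⟨?_, ?_⟩, Finset.mem_insert_self g B, h, Finset.mem_insert_of_mem hhB,
          (Finset.mem_erase.mp (hsub hhB)).1, hC⟩
        · exact Finset.insert_subset hg (hsub.trans (Finset.erase_subset g T))
        · rw [Finset.card_insert_of_notMem hgB, hcard]
    have count2 : (((T.erase g).powersetCard p).filter (fun B => ¬ ∃ h ∈ B, C g h))
        = ((T.erase g).filter fun h => ¬ C g h).powersetCard p := by
      ext B
      simp only [Finset.mem_filter, Finset.mem_powersetCard, not_exists, not_and]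
      constructor
      · rintro ⟨⟨hsub, hcard⟩, hnc⟩
        exact ⟨fun x hx => Finset.mem_filter.mpr ⟨hsub hx, hnc x hx⟩, hcard⟩
      · rintro ⟨hsub, hcard⟩
        exact ⟨⟨fun x hx => (Finset.mem_filter.mp (hsub hx)).1, hcard⟩,
          fun x hx => (Finset.mem_filter.mp (hsub hx)).2⟩
    have htot : (((T.erase g).powersetCard p).filter (fun B => ∃ h ∈ B, C g h)).card
        = (T.card - 1).choose p - (((T.erase g).filter fun h => ¬ C g h).card).choose p := by
      have h1 := Finset.card_filter_add_card_filter_not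
        (s := (T.erase g).powersetCard p) (fun B => ∃ h ∈ B, C g h)
      rw [count2, Finset.card_powersetCard, Finset.card_powersetCard,
        Finset.card_erase_of_mem hg] at h1
      omega
    rw [count1, htot]
    have hcast : ∀ k : ℕ, (((p+1 : ℕ)):ℤ) - 1 - (k:ℤ) = (p:ℤ) - k := by
      intro k; push_cast; ring
    simp only [hcast]
    rw [alg_sum]
    have h2 : T.card - 1 - ((T.erase g).filter fun h => C g h).card
        = ((T.erase g).filter fun h => ¬ C g h).card := by omega
    rw [h2, hNR]
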